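/- Let 𝐗 = (X,𝕏) be a p-rough path controlled by ω on [0,T] and let (H,H') ∈ 𝒟_X(L(ℝ^d,ℝ^e)). Then for every 0 ≤ s ≤ t ≤ T and every sequence (π_n) of partitions of [s,t] with mesh tending to 0, the compensated Riemann sums Σ_{[u,v]∈π_n} (H_u X_{uv} + H'_u 𝕏_{uv}) converge as n → ∞ to a limit ∫_s^t H d𝐗 independent of the chosen sequence of partitions. Moreover ∫_s^t H d𝐗 = ∫_s^u H d𝐗 + ∫_u^t H d𝐗 for s ≤ u ≤ t, there is a constant C with |∫_s^t H d𝐗 − H_s X_{st} − H'_s 𝕏_{st}| ≤ C ω(s,t)^{3/p} for all s ≤ t, and the path t ↦ ∫_0^t H d𝐗 belongs to C^p_ω([0,T],ℝ^e). -/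

import Mathlib

open Filter Topology Set

noncomputable section

/-- `ω` is a control on `[0,T]`: continuous on the simplex, vanishing on the diagonal,
superadditive and nonnegative. -/
def IsControl (T : ℝ) (ω : ℝ → ℝ → ℝ) : Prop :=
  ContinuousOn (fun q : ℝ × ℝ => ω q.1 q.2) {q : ℝ × ℝ | 0 ≤ q.1 ∧ q.1 ≤ q.2 ∧ q.2 ≤ T} ∧
    (∀ t : ℝ, 0 ≤ t → t ≤ T → ω t t = 0) ∧
    (∀ s u t : ℝ, 0 ≤ s → s ≤ u → u ≤ t → t ≤ T → ω s u + ω u t ≤ ω s t) ∧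
    (∀ s t : ℝ, 0 ≤ s → s ≤ t → t ≤ T → 0 ≤ ω s t)

/-- Membership in `C^{1/r}_ω([0,T],V)`: continuity on `[0,T]` together with the increment
bound `‖Y_t − Y_s‖ ≤ C ω(s,t)^r`. -/
def HolderPath (T r : ℝ) (ω : ℝ → ℝ → ℝ) {V : Type*} [NormedAddCommGroup V]
    (Y : ℝ → V) : Prop :=
  ContinuousOn Y (Set.Icc 0 T) ∧
    ∃ C : ℝ, ∀ s t : ℝ, 0 ≤ s → s ≤ t → t ≤ T → ‖Y t - Y s‖ ≤ C * ω s t ^ r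

/-- `(X, XX)` is a `p`-rough path controlled by `ω` on `[0,T]`. -/
def IsRoughPath (T p : ℝ) (ω : ℝ → ℝ → ℝ) {d : ℕ}
    (X : ℝ → Fin d → ℝ) (XX : ℝ → ℝ → Fin d → Fin d → ℝ) : Prop :=
  HolderPath T (1 / p) ω X ∧
    ContinuousOn (fun q : ℝ × ℝ => XX q.1 q.2) {q : ℝ × ℝ | 0 ≤ q.1 ∧ q.1 ≤ q.2 ∧ q.2 ≤ T} ∧
    (∃ C : ℝ, ∀ s t : ℝ, 0 ≤ s → s ≤ t → t ≤ T → ‖XX s t‖ ≤ C * ω s t ^ (2 / p)) ∧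
    (∀ s u t : ℝ, 0 ≤ s → s ≤ u → u ≤ t → t ≤ T → ∀ α β : Fin d,
      XX s t α β = XX s u α β + (X u α - X s α) * (X t β - X u β) + XX u t α β)

/-- `(H, H')` is an `X`-controlled path with values in `V`; `H' t γ` is the Gubinelli
derivative at time `t` in the direction of the `γ`-th coordinate. -/
def IsControlledPath (T p : ℝ) (ω : ℝ → ℝ → ℝ) {d : ℕ} (X : ℝ → Fin d → ℝ)
    {V : Type*} [NormedAddCommGroup V] [NormedSpace ℝ V]
    (H : ℝ → V) (H' : ℝ → Fin d → V) : Prop :=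
  HolderPath T (1 / p) ω H ∧ HolderPath T (1 / p) ω H' ∧
    ∃ C : ℝ, ∀ s t : ℝ, 0 ≤ s → s ≤ t → t ≤ T →
      ‖H t - H s - ∑ γ, (X t γ - X s γ) • H' s γ‖ ≤ C * ω s t ^ (2 / p)

/-- The bracket `[𝐗]` of the rough path `(X, XX)`. -/
def bracket {d : ℕ} (X : ℝ → Fin d → ℝ) (XX : ℝ → ℝ → Fin d → Fin d → ℝ)
    (s t : ℝ) (α β : Fin d) : ℝ :=
  (X t α - X s α) * (X t β - X s β) - (XX s t α β + XX s t β α)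

/-- A partition of `[s,t]` into `n` consecutive intervals. -/
structure RoughPartition (s t : ℝ) where
  n : ℕ
  pts : ℕ → ℝ
  mono : Monotone pts
  first : pts 0 = s
  last : pts n = t

/-- The mesh of a partition. -/
def RoughPartition.mesh {s t : ℝ} (π : RoughPartition s t) : ℝ :=
  ⨆ i : Fin π.n, (π.pts (i.1 + 1) - π.pts i.1)

/-- The Riemann sum of a two-parameter summand along a partition. -/
def riemannSum {s t : ℝ} {V : Type*} [AddCommMonoid V]
    (π : RoughPartition s t) (f : ℝ → ℝ → V) : V :=
  ∑ i ∈ Finset.range π.n, f (π.pts i) (π.pts (i + 1))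

/-- `L` is the limit of the Riemann sums of `f` along every sequence of partitions of `[s,t]`
with mesh tending to `0`. -/
def RSumLimit {V : Type*} [AddCommMonoid V] [TopologicalSpace V] (s t : ℝ)
    (f : ℝ → ℝ → V) (L : V) : Prop :=
  ∀ π : ℕ → RoughPartition s t,
    Tendsto (fun n => (π n).mesh) atTop (𝓝 0) →
      Tendsto (fun n => riemannSum (π n) f) atTop (𝓝 L)

/-- The compensated Riemann summand `H_u X_{uv} + H'_u 𝕏_{uv}` of a controlled integrand
against a rough path. -/
def roughSummand {d e : ℕ} (X : ℝ → Fin d → ℝ) (XX : ℝ → ℝ → Fin d → Fin d → ℝ)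
    (H : ℝ → Fin e → Fin d → ℝ) (H' : ℝ → Fin d → Fin e → Fin d → ℝ) :
    ℝ → ℝ → Fin e → ℝ :=
  fun u v k => (∑ γ, H u k γ * (X v γ - X u γ)) + ∑ α, ∑ β, H' u α k β * XX u v α β

/-- The partial derivative `∂_α f^i (x)`. -/
def pderiv {m n : ℕ} (f : (Fin m → ℝ) → (Fin n → ℝ)) (x : Fin m → ℝ)
    (α : Fin m) (i : Fin n) : ℝ :=
  fderiv ℝ f x (Pi.single α 1) i

/-- The second partial derivative `∂_{αβ} f^k (x)`. -/
def pderiv2 {m n : ℕ} (f : (Fin m → ℝ) → (Fin n → ℝ)) (x : Fin m → ℝ)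
    (α β : Fin m) (k : Fin n) : ℝ :=
  fderiv ℝ (fun y => fderiv ℝ f y (Pi.single β 1) k) x (Pi.single α 1)


/-!
By Chen's identity the defect `Ξ_{st} - Ξ_{su} - Ξ_{ut}` of the compensated summand
`Ξ_{uv} = H_u X_{uv} + H'_u 𝕏_{uv}` equals `-(R_{su} X_{ut} + (H'_u - H'_s) 𝕏_{ut})`, hence is
`O(ω(s,t)^θ)` with `θ = 3/p > 1`. For any such `Ξ` (the sewing lemma), Young's argument removes
one by one the points of a partition whose neighbours are `ω`-closest; this bounds every Riemann
sum by `Ξ_{st} + O(ω(s,t)^θ)`. Applied on each interval `[u,v]` of a partition, it shows that the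
Riemann sum of any refinement differs from that of the partition by `O(max ω(u,v)^{θ-1} ω(s,t))`,
so, through common refinements, the Riemann sums are Cauchy as the mesh tends to `0`.
Concatenating partitions makes the limit additive, and the local estimate together with
`‖Ξ_{st}‖ = O(ω(s,t)^{1/p})` gives the `1/p`-Hölder bound and continuity.
-/

lemma sum_range_eq_sum_even_add_sum_odd {M : Type*} [AddCommMonoid M] (f : ℕ → M) (n : ℕ) :
    ∑ i ∈ Finset.range n, f i =
      ∑ j ∈ Finset.range ((n + 1) / 2), f (2 * j) + ∑ j ∈ Finset.range (n / 2), f (2 * j + 1) := by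
  induction n with
  | zero => simp
  | succ n ih =>
    rw [Finset.sum_range_succ, ih]
    rcases Nat.even_or_odd' n with ⟨m, rfl | rfl⟩
    · rw [show (2 * m + 1 + 1) / 2 = m + 1 by omega, show (2 * m + 1) / 2 = m by omega,
        show 2 * m / 2 = m by omega, Finset.sum_range_succ]
      abel
    · rw [show (2 * m + 1 + 1 + 1) / 2 = m + 1 by omega, show (2 * m + 1 + 1) / 2 = m + 1 by omega,
        show (2 * m + 1) / 2 = m by omega, Finset.sum_range_succ (fun j => f (2 * j + 1)) m]
      abel

lemma sum_range_succ_sub_sum_range_skip {M : Type*} [AddCommGroup M] (g : ℕ → ℕ → M) {i m : ℕ}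
    (him : i < m) :
    ∑ j ∈ Finset.range (m + 1), g j (j + 1) -
        ∑ j ∈ Finset.range m,
          g (if j ≤ i then j else j + 1) (if j + 1 ≤ i then j + 1 else j + 1 + 1) =
      g i (i + 1) + g (i + 1) (i + 2) - g i (i + 2) := by
  set g' : ℕ → M := fun j => g (if j ≤ i then j else j + 1) (if j + 1 ≤ i then j + 1 else j + 1 + 1)
  induction m, him using Nat.le_induction with
  | base =>
    have hlow : ∑ j ∈ Finset.range i, g' j = ∑ j ∈ Finset.range i, g j (j + 1) :=
      Finset.sum_congr rfl fun j hj => by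
        rw [Finset.mem_range] at hj
        simp only [g', if_pos hj.le, if_pos (show j + 1 ≤ i from hj)]
    have hi : g' i = g i (i + 2) := by simp only [g', if_pos le_rfl, if_neg (by omega : ¬i + 1 ≤ i)]
    rw [Finset.sum_range_succ, Finset.sum_range_succ, Finset.sum_range_succ g', hlow, hi]
    abel
  | succ m him ih =>
    have hm : g' m = g (m + 1) (m + 1 + 1) := by
      simp only [g', if_neg (by omega : ¬m ≤ i), if_neg (by omega : ¬m + 1 ≤ i)]
    rw [Finset.sum_range_succ _ (m + 1), Finset.sum_range_succ g' m, hm, add_sub_add_right_eq_sub,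
      ih]

lemma Finset.sum_range_sum_Ico {M : Type*} [AddCommMonoid M] (g : ℕ → M) {k : ℕ → ℕ}
    (hk : Monotone k) (n : ℕ) :
    ∑ j ∈ Finset.range n, ∑ l ∈ Finset.Ico (k j) (k (j + 1)), g l =
      ∑ l ∈ Finset.Ico (k 0) (k n), g l := by
  induction n with
  | zero => simp
  | succ n ih =>
    rw [Finset.sum_range_succ, ih, Finset.sum_Ico_consecutive _ (hk n.zero_le) (hk n.le_succ)]

lemma rpow_le_rpow_sub_one_mul {x η θ : ℝ} (hx : 0 ≤ x) (hxη : x ≤ η) (hθ : 1 ≤ θ) :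
    x ^ θ ≤ η ^ (θ - 1) * x := by
  calc x ^ θ = x ^ (θ - 1) * x := by
        rw [← Real.rpow_add_one' hx (by linarith), sub_add_cancel]
    _ ≤ η ^ (θ - 1) * x := by gcongr

lemma exists_pos_mul_rpow_lt (C : ℝ) {ε r : ℝ} (hε : 0 < ε) (hr : 0 < r) :
    ∃ η > 0, C * η ^ r < ε := by
  have hlim : Tendsto (fun η : ℝ => C * η ^ r) (𝓝[>] 0) (𝓝 0) := by
    simpa [Real.zero_rpow hr.ne'] using
      ((Real.continuousAt_rpow_const 0 r (Or.inr hr.le)).tendsto.mono_left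
        nhdsWithin_le_nhds).const_mul C
  obtain ⟨η, hηε, hη⟩ := ((hlim.eventually (gt_mem_nhds hε)).and self_mem_nhdsWithin).exists
  exact ⟨η, hη, hηε⟩

namespace IsControl

variable {T : ℝ} {ω : ℝ → ℝ → ℝ}

lemma nonneg (hω : IsControl T ω) {s t : ℝ} (hs : 0 ≤ s) (hst : s ≤ t) (ht : t ≤ T) :
    0 ≤ ω s t :=
  hω.2.2.2 s t hs hst ht

lemma mono (hω : IsControl T ω) {s s' t' t : ℝ} (hs : 0 ≤ s) (hss' : s ≤ s') (hs't' : s' ≤ t')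
    (ht't : t' ≤ t) (ht : t ≤ T) : ω s' t' ≤ ω s t := by
  have h₁ := hω.2.2.1 s s' t hs hss' (hs't'.trans ht't) ht
  have h₂ := hω.2.2.1 s' t' t (hs.trans hss') hs't' ht't ht
  have := hω.nonneg hs hss' (hs't'.trans ht't |>.trans ht)
  have := hω.nonneg (hs.trans (hss'.trans hs't')) ht't ht
  linarith

lemma sum_le (hω : IsControl T ω) {u : ℕ → ℝ} (hu : Monotone u) (h0 : 0 ≤ u 0) {n : ℕ}
    (hn : u n ≤ T) : ∑ j ∈ Finset.range n, ω (u j) (u (j + 1)) ≤ ω (u 0) (u n) := by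
  induction n with
  | zero => simp [hω.2.1 _ h0 hn]
  | succ n ih =>
    rw [Finset.sum_range_succ]
    have hn' : u n ≤ u (n + 1) := hu n.le_succ
    linarith [ih (hn'.trans hn), hω.2.2.1 _ _ _ h0 (hu n.zero_le) hn' hn]

/-- The intervals `[u i, u (i + 2)]` with `i` of equal parity are consecutive, so each parity
class contributes at most `ω (u 0) (u (n + 1))`. -/
lemma sum_gap_le (hω : IsControl T ω) {u : ℕ → ℝ} (hu : Monotone u) (h0 : 0 ≤ u 0) {n : ℕ}
    (hn : u (n + 1) ≤ T) :
    ∑ i ∈ Finset.range n, ω (u i) (u (i + 2)) ≤ 2 * ω (u 0) (u (n + 1)) := by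
  have heven : ∑ j ∈ Finset.range ((n + 1) / 2), ω (u (2 * j)) (u (2 * j + 2)) ≤
      ω (u 0) (u (n + 1)) := by
    have hv : Monotone fun j => u (2 * j) := hu.comp fun a b h => by omega
    have hend : u (2 * ((n + 1) / 2)) ≤ u (n + 1) := hu (by omega)
    refine (hω.sum_le hv h0 (hend.trans hn)).trans (hω.mono h0 le_rfl (hu (Nat.zero_le _)) hend hn)
  have hodd : ∑ j ∈ Finset.range (n / 2), ω (u (2 * j + 1)) (u (2 * j + 1 + 2)) ≤
      ω (u 0) (u (n + 1)) := by
    have hv : Monotone fun j => u (2 * j + 1) := hu.comp fun a b h => by omega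
    have hend : u (2 * (n / 2) + 1) ≤ u (n + 1) := hu (by omega)
    refine (hω.sum_le hv (h0.trans (hu (Nat.zero_le 1))) (hend.trans hn)).trans
      (hω.mono h0 (hu (Nat.zero_le 1)) (hu (by omega)) hend hn)
  rw [sum_range_eq_sum_even_add_sum_odd]
  linarith

lemma rpow_mul_rpow_le (hω : IsControl T ω) {a b : ℝ} (ha : 0 ≤ a) (hb : 0 ≤ b) {s u t : ℝ}
    (hs : 0 ≤ s) (hsu : s ≤ u) (hut : u ≤ t) (ht : t ≤ T) :
    ω s u ^ a * ω u t ^ b ≤ ω s t ^ (a + b) := by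
  rw [Real.rpow_add_of_nonneg (hω.nonneg hs (hsu.trans hut) ht) ha hb]
  exact mul_le_mul
    (Real.rpow_le_rpow (hω.nonneg hs hsu (hut.trans ht)) (hω.mono hs le_rfl hsu hut ht) ha)
    (Real.rpow_le_rpow (hω.nonneg (hs.trans hsu) hut ht) (hω.mono hs hsu hut le_rfl ht) hb)
    (Real.rpow_nonneg (hω.nonneg (hs.trans hsu) hut ht) b)
    (Real.rpow_nonneg (hω.nonneg hs (hsu.trans hut) ht) a)

lemma rpow_le_mul_rpow (hω : IsControl T ω) {a c : ℝ} (ha : 0 ≤ a) (hc : 0 ≤ c) {s t : ℝ}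
    (hs : 0 ≤ s) (hst : s ≤ t) (ht : t ≤ T) :
    ω s t ^ (a + c) ≤ ω 0 T ^ c * ω s t ^ a := by
  have hω₀ := hω.nonneg hs hst ht
  rw [Real.rpow_add_of_nonneg hω₀ ha hc, mul_comm]
  gcongr
  exact hω.mono le_rfl hs hst ht le_rfl

lemma exists_nonneg_bound (hω : IsControl T ω) {r : ℝ} {f : ℝ → ℝ → ℝ}
    (h : ∃ C, ∀ s t, 0 ≤ s → s ≤ t → t ≤ T → f s t ≤ C * ω s t ^ r) :
    ∃ C, 0 ≤ C ∧ ∀ s t, 0 ≤ s → s ≤ t → t ≤ T → f s t ≤ C * ω s t ^ r := by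
  obtain ⟨C, hC⟩ := h
  refine ⟨|C|, abs_nonneg C, fun s t hs hst ht => (hC s t hs hst ht).trans ?_⟩
  gcongr
  · exact Real.rpow_nonneg (hω.nonneg hs hst ht) r
  · exact le_abs_self C

lemma exists_pos_forall_lt (hω : IsControl T ω) {ε : ℝ} (hε : 0 < ε) :
    ∃ δ > 0, ∀ a b, 0 ≤ a → a ≤ b → b ≤ T → b - a < δ → ω a b < ε := by
  set D : Set (ℝ × ℝ) := {q | 0 ≤ q.1 ∧ q.1 ≤ q.2 ∧ q.2 ≤ T}
  have hD : IsCompact D := (isCompact_Icc.prod isCompact_Icc).of_isClosed_subset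
    ((isClosed_le continuous_const continuous_fst).inter
      ((isClosed_le continuous_fst continuous_snd).inter
        (isClosed_le continuous_snd continuous_const)))
    fun q ⟨h₁, h₂, h₃⟩ => ⟨⟨h₁, h₂.trans h₃⟩, h₁.trans h₂, h₃⟩
  obtain ⟨δ, hδ, hδε⟩ :=
    Metric.uniformContinuousOn_iff.1 (hD.uniformContinuousOn_of_continuous hω.1) ε hε
  refine ⟨δ, hδ, fun a b ha hab hb hba => ?_⟩
  have hdist : dist (a, b) (a, a) < δ := by
    rw [Prod.dist_eq, dist_self, Real.dist_eq, abs_of_nonneg (by linarith)]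
    exact max_lt hδ hba
  have := hδε (a, b) ⟨ha, hab, hb⟩ (a, a) ⟨ha, le_rfl, hab.trans hb⟩ hdist
  rw [hω.2.1 a ha (hab.trans hb), Real.dist_eq, sub_zero] at this
  exact (le_abs_self _).trans_lt this

lemma tendsto_min_max (hω : IsControl T ω) {a : ℝ} (ha : a ∈ Icc 0 T) :
    Tendsto (fun x => ω (min x a) (max x a)) (𝓝[Icc 0 T] a) (𝓝 0) := by
  have hcont : ContinuousWithinAt (fun q : ℝ × ℝ => ω q.1 q.2)
      {q : ℝ × ℝ | 0 ≤ q.1 ∧ q.1 ≤ q.2 ∧ q.2 ≤ T} (a, a) :=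
    hω.1 (a, a) ⟨ha.1, le_rfl, ha.2⟩
  have hmaps : MapsTo (fun x => (min x a, max x a)) (Icc 0 T)
      {q : ℝ × ℝ | 0 ≤ q.1 ∧ q.1 ≤ q.2 ∧ q.2 ≤ T} := fun x hx =>
    ⟨le_min hx.1 ha.1, min_le_max, max_le hx.2 ha.2⟩
  have hf : Continuous fun x => (min x a, max x a) :=
    (continuous_id.min continuous_const).prodMk (continuous_id.max continuous_const)
  have := hcont.comp_of_eq hf.continuousWithinAt hmaps (Prod.ext (min_self a) (max_self a))
  simpa [ContinuousWithinAt, Function.comp_def, hω.2.1 a ha.1 ha.2] using this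

end IsControl

namespace RoughPartition

variable {s u t : ℝ}

lemma le_pts (π : RoughPartition s t) (j : ℕ) : s ≤ π.pts j :=
  π.first.symm.le.trans (π.mono (Nat.zero_le j))

lemma pts_le (π : RoughPartition s t) {j : ℕ} (hj : j ≤ π.n) : π.pts j ≤ t :=
  (π.mono hj).trans π.last.le

lemma left_le_right (π : RoughPartition s t) : s ≤ t :=
  (π.le_pts π.n).trans (π.pts_le le_rfl)

lemma increment_le_mesh (π : RoughPartition s t) {j : ℕ} (hj : j < π.n) :
    π.pts (j + 1) - π.pts j ≤ π.mesh :=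
  le_ciSup (f := fun i : Fin π.n => π.pts (i.1 + 1) - π.pts i.1) (Set.finite_range _).bddAbove
    ⟨j, hj⟩

lemma mesh_nonneg (π : RoughPartition s t) : 0 ≤ π.mesh :=
  Real.iSup_nonneg fun i => sub_nonneg.2 (π.mono i.1.le_succ)

lemma mesh_le {π : RoughPartition s t} {δ : ℝ} (hδ : 0 ≤ δ)
    (h : ∀ j < π.n, π.pts (j + 1) - π.pts j ≤ δ) : π.mesh ≤ δ :=
  Real.iSup_le (fun i => h i.1 i.2) hδ

def eraseSucc (π : RoughPartition s t) (i : ℕ) (hi : i + 1 < π.n) : RoughPartition s t where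
  n := π.n - 1
  pts j := π.pts (if j ≤ i then j else j + 1)
  mono a b hab := π.mono (by split_ifs <;> omega)
  first := by simp [π.first]
  last := by rw [if_neg (by omega), Nat.sub_add_cancel (by omega), π.last]

def slice (π : RoughPartition s t) {a b : ℕ} (hab : a ≤ b) :
    RoughPartition (π.pts a) (π.pts b) where
  n := b - a
  pts l := π.pts (a + l)
  mono _ _ h := π.mono (by omega)
  first := rfl
  last := by rw [Nat.add_sub_cancel' hab]

def ofFinset (F : Finset ℝ) (hs : s ∈ F) (ht : t ∈ F) (hF : ∀ x ∈ F, s ≤ x ∧ x ≤ t) :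
    RoughPartition s t where
  n := F.card - 1
  pts l := F.orderEmbOfFin rfl ⟨min l (F.card - 1), by
    have := Finset.card_pos.2 ⟨s, hs⟩; omega⟩
  mono a b hab := (F.orderEmbOfFin rfl).monotone (Fin.mk_le_mk.2 (by omega))
  first := by
    simp only [Nat.zero_min]
    rw [Finset.orderEmbOfFin_zero rfl (Finset.card_pos.2 ⟨s, hs⟩)]
    exact le_antisymm (F.min'_le s hs) (hF _ (F.min'_mem _)).1
  last := by
    simp only [min_self]
    rw [Finset.orderEmbOfFin_last rfl (Finset.card_pos.2 ⟨s, hs⟩)]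
    exact le_antisymm (hF _ (F.max'_mem _)).2 (F.le_max' t ht)

def Refines (π' π : RoughPartition s t) : Prop :=
  ∃ k : ℕ → ℕ, Monotone k ∧ k 0 = 0 ∧ k π.n = π'.n ∧ ∀ j ≤ π.n, π'.pts (k j) = π.pts j

lemma refines_ofFinset {F : Finset ℝ} (hs : s ∈ F) (ht : t ∈ F) (hF : ∀ x ∈ F, s ≤ x ∧ x ≤ t)
    (π : RoughPartition s t) (hπ : ∀ j ≤ π.n, π.pts j ∈ F) :
    (ofFinset F hs ht hF).Refines π := by
  set e := F.orderIsoOfFin rfl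
  have hpos : 0 < F.card := Finset.card_pos.2 ⟨s, hs⟩
  have hpts : ∀ i : Fin F.card, (ofFinset F hs ht hF).pts i = e i := fun i => by
    simp only [ofFinset, Finset.coe_orderIsoOfFin_apply, e]
    congr
    omega
  have hindex : ∀ x (hx : x ∈ F) (i : Fin F.card), x = e i → (e.symm ⟨x, hx⟩ : ℕ) = i := by
    rintro x hx i rfl
    simp
  refine ⟨fun j => e.symm ⟨π.pts (min j π.n), hπ _ (min_le_right _ _)⟩, ?_, ?_, ?_, ?_⟩
  · exact fun a b hab => e.symm.monotone (π.mono (min_le_min_right _ hab))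
  · refine hindex _ _ ⟨0, hpos⟩ ?_
    rw [← hpts, (ofFinset F hs ht hF).first, Nat.min_eq_left (Nat.zero_le _), π.first]
  · refine hindex _ _ ⟨F.card - 1, by omega⟩ ?_
    rw [← hpts, min_self, π.last]
    exact (ofFinset F hs ht hF).last.symm
  · intro j hj
    rw [hpts, OrderIso.apply_symm_apply]
    exact congrArg π.pts (Nat.min_eq_left hj)

lemma exists_refines_refines (π₁ π₂ : RoughPartition s t) :
    ∃ π : RoughPartition s t, π.Refines π₁ ∧ π.Refines π₂ := by
  set F := (Finset.range (π₁.n + 1)).image π₁.pts ∪ (Finset.range (π₂.n + 1)).image π₂.pts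
  have h₁ : ∀ j ≤ π₁.n, π₁.pts j ∈ F := fun j hj =>
    Finset.mem_union_left _ (Finset.mem_image_of_mem _ (Finset.mem_range.2 (by omega)))
  have h₂ : ∀ j ≤ π₂.n, π₂.pts j ∈ F := fun j hj =>
    Finset.mem_union_right _ (Finset.mem_image_of_mem _ (Finset.mem_range.2 (by omega)))
  have hs : s ∈ F := π₁.first ▸ h₁ 0 (Nat.zero_le _)
  have ht : t ∈ F := π₁.last ▸ h₁ π₁.n le_rfl
  have hF : ∀ x ∈ F, s ≤ x ∧ x ≤ t := by
    intro x hx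
    rcases Finset.mem_union.1 hx with hx | hx <;>
    · obtain ⟨j, hj, rfl⟩ := Finset.mem_image.1 hx
      exact ⟨le_pts _ j, pts_le _ (Nat.lt_succ_iff.1 (Finset.mem_range.1 hj))⟩
  exact ⟨ofFinset F hs ht hF, refines_ofFinset hs ht hF π₁ h₁, refines_ofFinset hs ht hF π₂ h₂⟩

def append (π₁ : RoughPartition s u) (π₂ : RoughPartition u t) : RoughPartition s t where
  n := π₁.n + π₂.n
  pts j := if j ≤ π₁.n then π₁.pts j else π₂.pts (j - π₁.n)
  mono a b hab := by
    dsimp only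
    split_ifs with ha hb hb
    · exact π₁.mono hab
    · exact (π₁.pts_le ha).trans (π₂.le_pts _)
    · omega
    · exact π₂.mono (by omega)
  first := by simp [π₁.first]
  last := by
    split_ifs with h
    · have h₀ : π₂.n = 0 := by omega
      rw [h₀, add_zero, π₁.last, ← π₂.first]
      exact congrArg π₂.pts h₀.symm |>.trans π₂.last
    · rw [Nat.add_sub_cancel_left, π₂.last]


variable {M : Type*}

lemma riemannSum_sub_riemannSum_eraseSucc [AddCommGroup M] (π : RoughPartition s t)
    {i : ℕ} (hi : i + 1 < π.n) (f : ℝ → ℝ → M) :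
    riemannSum π f - riemannSum (π.eraseSucc i hi) f =
      f (π.pts i) (π.pts (i + 1)) + f (π.pts (i + 1)) (π.pts (i + 2)) -
        f (π.pts i) (π.pts (i + 2)) := by
  obtain ⟨m, hm⟩ : ∃ m, π.n = m + 1 := ⟨π.n - 1, by omega⟩
  have := sum_range_succ_sub_sum_range_skip (fun a b => f (π.pts a) (π.pts b))
    (show i < m by omega)
  simp only [riemannSum, eraseSucc, hm, Nat.add_sub_cancel]
  convert this using 3

lemma riemannSum_slice [AddCommMonoid M] (π : RoughPartition s t) {a b : ℕ} (hab : a ≤ b)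
    (f : ℝ → ℝ → M) :
    riemannSum (π.slice hab) f = ∑ l ∈ Finset.Ico a b, f (π.pts l) (π.pts (l + 1)) := by
  rw [Finset.sum_Ico_eq_sum_range]
  rfl

lemma append_pts_of_le (π₁ : RoughPartition s u) (π₂ : RoughPartition u t) {j : ℕ}
    (hj : j ≤ π₁.n) : (π₁.append π₂).pts j = π₁.pts j :=
  if_pos hj

lemma append_pts_add (π₁ : RoughPartition s u) (π₂ : RoughPartition u t) (i : ℕ) :
    (π₁.append π₂).pts (π₁.n + i) = π₂.pts i := by
  rcases Nat.eq_zero_or_pos i with rfl | hi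
  · rw [add_zero, append_pts_of_le _ _ le_rfl, π₁.last, π₂.first]
  · exact (if_neg (by omega)).trans (congrArg π₂.pts (Nat.add_sub_cancel_left π₁.n i))

lemma riemannSum_append [AddCommMonoid M] (π₁ : RoughPartition s u) (π₂ : RoughPartition u t)
    (f : ℝ → ℝ → M) :
    riemannSum (π₁.append π₂) f = riemannSum π₁ f + riemannSum π₂ f := by
  refine (Finset.sum_range_add _ π₁.n π₂.n).trans (congrArg₂ _ ?_ ?_)
  · refine Finset.sum_congr rfl fun j hj => ?_
    rw [Finset.mem_range] at hj
    rw [append_pts_of_le _ _ hj.le, append_pts_of_le _ _ hj]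
  · refine Finset.sum_congr rfl fun j _ => ?_
    rw [append_pts_add, add_assoc, append_pts_add]

lemma mesh_append_le (π₁ : RoughPartition s u) (π₂ : RoughPartition u t) :
    (π₁.append π₂).mesh ≤ π₁.mesh + π₂.mesh := by
  refine mesh_le (add_nonneg π₁.mesh_nonneg π₂.mesh_nonneg) fun j hj => ?_
  rcases lt_or_ge j π₁.n with h | h
  · rw [append_pts_of_le _ _ h, append_pts_of_le _ _ h.le]
    linarith [π₁.increment_le_mesh h, π₂.mesh_nonneg]
  · obtain ⟨i, rfl⟩ := Nat.exists_eq_add_of_le h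
    rw [add_assoc, append_pts_add, append_pts_add]
    linarith [π₂.increment_le_mesh (show i < π₂.n by simp only [append] at hj; omega),
      π₁.mesh_nonneg]

def uniform (hst : s ≤ t) (m : ℕ) : RoughPartition s t where
  n := m + 1
  pts j := s + (min j (m + 1) : ℕ) * ((t - s) / (m + 1))
  mono a b hab := by
    have : ((min a (m + 1) : ℕ) : ℝ) ≤ (min b (m + 1) : ℕ) := by
      exact_mod_cast min_le_min_right _ hab
    have : 0 ≤ (t - s) / (m + 1) := by have := sub_nonneg.2 hst; positivity
    dsimp only
    nlinarith
  first := by simp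
  last := by
    simp only [min_self]
    push_cast
    field_simp
    ring

lemma tendsto_mesh_uniform (hst : s ≤ t) :
    Tendsto (fun m => (uniform hst m).mesh) atTop (𝓝 0) := by
  have hlim : Tendsto (fun m : ℕ => (t - s) * (1 / ((m : ℝ) + 1))) atTop (𝓝 0) := by
    simpa using tendsto_one_div_add_atTop_nhds_zero_nat.const_mul (t - s)
  refine squeeze_zero (fun m => mesh_nonneg _) (fun m => mesh_le (by
    have := sub_nonneg.2 hst; positivity) fun j hj => le_of_eq ?_) hlim
  simp only [uniform] at hj ⊢
  rw [Nat.min_eq_left (by omega), Nat.min_eq_left (by omega)]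
  push_cast
  ring

def meshFilter (s t : ℝ) : Filter (RoughPartition s t) :=
  comap mesh (𝓝 0)

lemma meshFilter_neBot (hst : s ≤ t) : (meshFilter s t).NeBot :=
  ((tendsto_comap_iff (g := mesh)).2 (tendsto_mesh_uniform hst)).neBot

lemma tendsto_append :
    Tendsto (fun q : RoughPartition s u × RoughPartition u t => q.1.append q.2)
      (meshFilter s u ×ˢ meshFilter u t) (meshFilter s t) := by
  refine tendsto_comap_iff.2 (squeeze_zero (fun q => mesh_nonneg _)
    (fun q => mesh_append_le q.1 q.2) ?_)
  have h₁ : Tendsto (fun q : RoughPartition s u × RoughPartition u t => q.1.mesh)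
      (meshFilter s u ×ˢ meshFilter u t) (𝓝 0) := (tendsto_comap (f := mesh)).comp tendsto_fst
  have h₂ : Tendsto (fun q : RoughPartition s u × RoughPartition u t => q.2.mesh)
      (meshFilter s u ×ˢ meshFilter u t) (𝓝 0) := (tendsto_comap (f := mesh)).comp tendsto_snd
  simpa using h₁.add h₂

end RoughPartition

lemma rsumLimit_of_tendsto {V : Type*} [AddCommMonoid V] [TopologicalSpace V] {s t : ℝ}
    {f : ℝ → ℝ → V} {L : V}
    (h : Tendsto (fun π => riemannSum π f) (RoughPartition.meshFilter s t) (𝓝 L)) :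
    RSumLimit s t f L :=
  fun _ hπ => h.comp ((tendsto_comap_iff (g := RoughPartition.mesh)).2 hπ)

/-- The `k = 0` term is `(2 / 0) ^ θ = 0 ^ θ = 0`. -/
def sewingConst (θ : ℝ) : ℝ :=
  ∑' k : ℕ, (2 / k : ℝ) ^ θ

lemma summable_two_div_rpow {θ : ℝ} (hθ : 1 < θ) : Summable fun k : ℕ => (2 / k : ℝ) ^ θ := by
  refine (((Real.summable_one_div_nat_rpow).2 hθ).mul_left (2 ^ θ)).congr fun k => ?_
  rw [Real.div_rpow zero_le_two (Nat.cast_nonneg k), one_div, div_eq_mul_inv]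

lemma sum_range_le_sewingConst {θ : ℝ} (hθ : 1 < θ) (n : ℕ) :
    ∑ k ∈ Finset.range n, (2 / k : ℝ) ^ θ ≤ sewingConst θ :=
  (summable_two_div_rpow hθ).sum_le_tsum _ fun k _ => by positivity

lemma sewingConst_nonneg (θ : ℝ) : 0 ≤ sewingConst θ :=
  tsum_nonneg fun k => by positivity

section Sewing

variable {V : Type*} [NormedAddCommGroup V]

def SewingBound (T : ℝ) (ω : ℝ → ℝ → ℝ) (θ A : ℝ) (Ξ : ℝ → ℝ → V) : Prop :=
  ∀ s u t, 0 ≤ s → s ≤ u → u ≤ t → t ≤ T → ‖Ξ s t - Ξ s u - Ξ u t‖ ≤ A * ω s t ^ θ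

namespace SewingBound

variable {T θ A : ℝ} {ω : ℝ → ℝ → ℝ} {Ξ : ℝ → ℝ → V} {s t : ℝ}

lemma apply_self (hΞ : SewingBound T ω θ A Ξ) (hω : IsControl T ω) (hθ : 0 < θ) {r : ℝ}
    (hr : 0 ≤ r) (hrT : r ≤ T) : Ξ r r = 0 := by
  have := hΞ r r r hr le_rfl le_rfl hrT
  rwa [hω.2.1 r hr hrT, Real.zero_rpow hθ.ne', mul_zero, sub_self, zero_sub, norm_neg,
    norm_le_zero_iff] at this

lemma norm_riemannSum_sub_riemannSum_eraseSucc_le (hΞ : SewingBound T ω θ A Ξ) (hs : 0 ≤ s)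
    (ht : t ≤ T) (π : RoughPartition s t) {i : ℕ} (hi : i + 1 < π.n) :
    ‖riemannSum π Ξ - riemannSum (π.eraseSucc i hi) Ξ‖ ≤ A * ω (π.pts i) (π.pts (i + 2)) ^ θ := by
  rw [π.riemannSum_sub_riemannSum_eraseSucc hi, ← norm_neg]
  calc _ = ‖Ξ (π.pts i) (π.pts (i + 2)) - Ξ (π.pts i) (π.pts (i + 1)) -
          Ξ (π.pts (i + 1)) (π.pts (i + 2))‖ := by
        congr 1; abel
    _ ≤ A * ω (π.pts i) (π.pts (i + 2)) ^ θ :=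
        hΞ _ _ _ (hs.trans (π.le_pts i)) (π.mono (by omega)) (π.mono (by omega))
          ((π.pts_le (by omega)).trans ht)

/-- Young's argument: by `IsControl.sum_gap_le` some point `π.pts (i + 1)` has
`ω (π.pts i) (π.pts (i + 2)) ≤ 2 ω(s,t) / n`, and removing it costs `A (2 ω(s,t) / n) ^ θ`. -/
lemma norm_riemannSum_sub_le_sum (hΞ : SewingBound T ω θ A Ξ) (hω : IsControl T ω)
    (hθ : 0 < θ) (hA : 0 ≤ A) (hs : 0 ≤ s) (ht : t ≤ T) (π : RoughPartition s t) :
    ‖riemannSum π Ξ - Ξ s t‖ ≤ A * (∑ k ∈ Finset.range π.n, (2 / k : ℝ) ^ θ) * ω s t ^ θ := by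
  have hω₀ : 0 ≤ ω s t := hω.nonneg hs π.left_le_right ht
  obtain ⟨n, hn⟩ : ∃ n, π.n = n := ⟨_, rfl⟩
  rw [hn]
  induction n generalizing π with
  | zero =>
    have hst : s = t := π.first.symm.trans ((congrArg π.pts hn.symm).trans π.last)
    subst hst
    simp [riemannSum, hn, hΞ.apply_self hω hθ hs ht]
  | succ n ih =>
    have hlast : π.pts (n + 1) = t := (congrArg π.pts hn.symm).trans π.last
    rcases Nat.eq_zero_or_pos n with rfl | hpos
    · have : riemannSum π Ξ = Ξ s t := by simp [riemannSum, hn, π.first, hlast]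
      rw [this, sub_self, norm_zero]
      exact mul_nonneg (mul_nonneg hA (Finset.sum_nonneg fun k _ => by positivity))
        (Real.rpow_nonneg hω₀ θ)
    have hgaps : ∑ i ∈ Finset.range n, ω (π.pts i) (π.pts (i + 2)) ≤
        ∑ i ∈ Finset.range n, 2 * ω s t / n := by
      rw [Finset.sum_const, Finset.card_range, nsmul_eq_mul, mul_div_cancel₀ _ (by positivity)]
      have := hω.sum_gap_le π.mono (hs.trans (π.le_pts 0)) (hlast.le.trans ht)
      rwa [π.first, hlast] at this
    obtain ⟨i, hi, hgap⟩ :=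
      Finset.exists_le_of_sum_le (Finset.nonempty_range_iff.2 hpos.ne') hgaps
    rw [Finset.mem_range] at hi
    have hi' : i + 1 < π.n := by omega
    have hremove : ‖riemannSum π Ξ - riemannSum (π.eraseSucc i hi') Ξ‖ ≤
        A * (2 / n : ℝ) ^ θ * ω s t ^ θ := by
      refine (hΞ.norm_riemannSum_sub_riemannSum_eraseSucc_le hs ht π hi').trans ?_
      rw [mul_assoc, ← Real.mul_rpow (by positivity) hω₀, ← mul_div_right_comm]
      gcongr
      exact hω.nonneg (hs.trans (π.le_pts i)) (π.mono (by omega)) ((π.pts_le (by omega)).trans ht)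
    have hIH := ih (π.eraseSucc i hi') (by simp [RoughPartition.eraseSucc, hn])
    calc ‖riemannSum π Ξ - Ξ s t‖
        ≤ ‖riemannSum π Ξ - riemannSum (π.eraseSucc i hi') Ξ‖ +
            ‖riemannSum (π.eraseSucc i hi') Ξ - Ξ s t‖ := norm_sub_le_norm_sub_add_norm_sub _ _ _
      _ ≤ A * (2 / n : ℝ) ^ θ * ω s t ^ θ +
            A * (∑ k ∈ Finset.range n, (2 / k : ℝ) ^ θ) * ω s t ^ θ := add_le_add hremove hIH
      _ = A * (∑ k ∈ Finset.range (n + 1), (2 / k : ℝ) ^ θ) * ω s t ^ θ := by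
        rw [Finset.sum_range_succ]; ring

lemma norm_riemannSum_sub_le (hΞ : SewingBound T ω θ A Ξ) (hω : IsControl T ω) (hθ : 1 < θ)
    (hA : 0 ≤ A) (hs : 0 ≤ s) (ht : t ≤ T) (π : RoughPartition s t) :
    ‖riemannSum π Ξ - Ξ s t‖ ≤ A * sewingConst θ * ω s t ^ θ := by
  refine (hΞ.norm_riemannSum_sub_le_sum hω (by linarith) hA hs ht π).trans ?_
  have := Real.rpow_nonneg (hω.nonneg hs π.left_le_right ht) θ
  gcongr
  exact sum_range_le_sewingConst hθ _

lemma norm_riemannSum_sub_riemannSum_le_of_refines (hΞ : SewingBound T ω θ A Ξ)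
    (hω : IsControl T ω) (hθ : 1 < θ) (hA : 0 ≤ A) (hs : 0 ≤ s) (ht : t ≤ T)
    {π π' : RoughPartition s t} (hπ : π'.Refines π) {η : ℝ} (hη : 0 ≤ η)
    (hπη : ∀ j < π.n, ω (π.pts j) (π.pts (j + 1)) ≤ η) :
    ‖riemannSum π' Ξ - riemannSum π Ξ‖ ≤ A * sewingConst θ * η ^ (θ - 1) * ω s t := by
  obtain ⟨k, hk, hk₀, hkn, hkpts⟩ := hπ
  set p := π.pts
  have hp₀ : ∀ j, 0 ≤ p j := fun j => hs.trans (π.le_pts j)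
  have hpT : ∀ j ≤ π.n, p j ≤ T := fun j hj => (π.pts_le hj).trans ht
  have hblocks : riemannSum π' Ξ =
      ∑ j ∈ Finset.range π.n, riemannSum (π'.slice (hk (Nat.le_add_right j 1))) Ξ := by
    simp only [RoughPartition.riemannSum_slice]
    rw [Finset.sum_range_sum_Ico _ hk, hk₀, hkn, ← Finset.range_eq_Ico]
    rfl
  have hblock : ∀ j < π.n,
      ‖riemannSum (π'.slice (hk (Nat.le_add_right j 1))) Ξ - Ξ (p j) (p (j + 1))‖ ≤ A * sewingConst θ * (η ^ (θ - 1) * ω (p j) (p (j + 1))) := by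
    intro j hj
    have := hΞ.norm_riemannSum_sub_le hω hθ hA (hkpts j hj.le ▸ hp₀ j)
      (hkpts (j + 1) hj ▸ hpT _ hj) (π'.slice (hk (Nat.le_add_right j 1)))
    simp only [hkpts j hj.le, hkpts (j + 1) hj] at this
    refine this.trans (mul_le_mul_of_nonneg_left ?_ (mul_nonneg hA (sewingConst_nonneg θ)))
    exact rpow_le_rpow_sub_one_mul (hω.nonneg (hp₀ j) (π.mono j.le_succ) (hpT _ hj)) (hπη j hj)
      hθ.le
  calc ‖riemannSum π' Ξ - riemannSum π Ξ‖
      = ‖∑ j ∈ Finset.range π.n,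
          (riemannSum (π'.slice (hk (Nat.le_add_right j 1))) Ξ - Ξ (p j) (p (j + 1)))‖ := by
        rw [hblocks, riemannSum, Finset.sum_sub_distrib]
    _ ≤ ∑ j ∈ Finset.range π.n, A * sewingConst θ * (η ^ (θ - 1) * ω (p j) (p (j + 1))) :=
        (norm_sum_le _ _).trans (Finset.sum_le_sum fun j hj => hblock j (Finset.mem_range.1 hj))
    _ = A * sewingConst θ * η ^ (θ - 1) * ∑ j ∈ Finset.range π.n, ω (p j) (p (j + 1)) := by
        rw [Finset.mul_sum]
        simp only [mul_assoc]
    _ ≤ A * sewingConst θ * η ^ (θ - 1) * ω s t := by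
        have := sewingConst_nonneg θ
        gcongr
        simpa [p, π.first, π.last] using hω.sum_le π.mono (hp₀ 0) (hpT _ le_rfl)

lemma norm_riemannSum_sub_riemannSum_le (hΞ : SewingBound T ω θ A Ξ) (hω : IsControl T ω)
    (hθ : 1 < θ) (hA : 0 ≤ A) (hs : 0 ≤ s) (ht : t ≤ T) {π₁ π₂ : RoughPartition s t} {η : ℝ}
    (hη : 0 ≤ η) (h₁ : ∀ j < π₁.n, ω (π₁.pts j) (π₁.pts (j + 1)) ≤ η)
    (h₂ : ∀ j < π₂.n, ω (π₂.pts j) (π₂.pts (j + 1)) ≤ η) :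
    ‖riemannSum π₁ Ξ - riemannSum π₂ Ξ‖ ≤ 2 * (A * sewingConst θ * η ^ (θ - 1) * ω s t) := by
  obtain ⟨π, hπ₁, hπ₂⟩ := RoughPartition.exists_refines_refines π₁ π₂
  have e₁ := hΞ.norm_riemannSum_sub_riemannSum_le_of_refines hω hθ hA hs ht hπ₁ hη h₁
  have e₂ := hΞ.norm_riemannSum_sub_riemannSum_le_of_refines hω hθ hA hs ht hπ₂ hη h₂
  rw [norm_sub_rev] at e₁
  linarith [norm_sub_le_norm_sub_add_norm_sub (riemannSum π₁ Ξ) (riemannSum π Ξ) (riemannSum π₂ Ξ)]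

lemma exists_forall_mesh_lt_dist_lt (hΞ : SewingBound T ω θ A Ξ) (hω : IsControl T ω)
    (hθ : 1 < θ) (hA : 0 ≤ A) (hs : 0 ≤ s) (ht : t ≤ T) {ε : ℝ} (hε : 0 < ε) :
    ∃ δ > 0, ∀ π₁ π₂ : RoughPartition s t, π₁.mesh < δ → π₂.mesh < δ →
      dist (riemannSum π₁ Ξ) (riemannSum π₂ Ξ) < ε := by
  obtain ⟨η, hη, hηε⟩ :=
    exists_pos_mul_rpow_lt (2 * (A * sewingConst θ * ω s t)) hε (sub_pos.2 hθ)
  obtain ⟨δ, hδ, hδη⟩ := hω.exists_pos_forall_lt hη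
  have hfine : ∀ π : RoughPartition s t, π.mesh < δ →
      ∀ j < π.n, ω (π.pts j) (π.pts (j + 1)) ≤ η := fun π hπ j hj =>
    (hδη _ _ (hs.trans (π.le_pts j)) (π.mono j.le_succ) ((π.pts_le hj).trans ht)
      ((π.increment_le_mesh hj).trans_lt hπ)).le
  refine ⟨δ, hδ, fun π₁ π₂ h₁ h₂ => ?_⟩
  rw [dist_eq_norm]
  refine (hΞ.norm_riemannSum_sub_riemannSum_le hω hθ hA hs ht hη.le (hfine π₁ h₁)
    (hfine π₂ h₂)).trans_lt ?_
  linarith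

end SewingBound

end Sewing

section SewingIntegral

variable {V : Type*} [NormedAddCommGroup V] [CompleteSpace V]
variable {T θ A : ℝ} {ω : ℝ → ℝ → ℝ} {Ξ : ℝ → ℝ → V} {s u t : ℝ}

def sewingIntegral (Ξ : ℝ → ℝ → V) (s t : ℝ) : V :=
  limUnder (RoughPartition.meshFilter s t) fun π => riemannSum π Ξ

namespace SewingBound

lemma tendsto_sewingIntegral (hΞ : SewingBound T ω θ A Ξ) (hω : IsControl T ω) (hθ : 1 < θ)
    (hA : 0 ≤ A) (hs : 0 ≤ s) (hst : s ≤ t) (ht : t ≤ T) :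
    Tendsto (fun π => riemannSum π Ξ) (RoughPartition.meshFilter s t)
      (𝓝 (sewingIntegral Ξ s t)) := by
  have := RoughPartition.meshFilter_neBot hst
  refine tendsto_nhds_limUnder (cauchy_map_iff_exists_tendsto.1 (Metric.cauchy_iff.2
    ⟨inferInstance, fun ε hε => ?_⟩))
  obtain ⟨δ, hδ, hδε⟩ := hΞ.exists_forall_mesh_lt_dist_lt hω hθ hA hs ht hε
  refine ⟨_, image_mem_map (preimage_mem_comap (Iio_mem_nhds hδ)), ?_⟩
  rintro _ ⟨π₁, h₁, rfl⟩ _ ⟨π₂, h₂, rfl⟩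
  exact hδε π₁ π₂ h₁ h₂

lemma sewingIntegral_add (hΞ : SewingBound T ω θ A Ξ) (hω : IsControl T ω) (hθ : 1 < θ)
    (hA : 0 ≤ A) (hs : 0 ≤ s) (hsu : s ≤ u) (hut : u ≤ t) (ht : t ≤ T) :
    sewingIntegral Ξ s t = sewingIntegral Ξ s u + sewingIntegral Ξ u t := by
  have := RoughPartition.meshFilter_neBot hsu
  have := RoughPartition.meshFilter_neBot hut
  have h₁ := (hΞ.tendsto_sewingIntegral hω hθ hA hs hsu (hut.trans ht)).comp
    (tendsto_fst (f := RoughPartition.meshFilter s u) (g := RoughPartition.meshFilter u t))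
  have h₂ := (hΞ.tendsto_sewingIntegral hω hθ hA (hs.trans hsu) hut ht).comp
    (tendsto_snd (f := RoughPartition.meshFilter s u) (g := RoughPartition.meshFilter u t))
  refine tendsto_nhds_unique ((hΞ.tendsto_sewingIntegral hω hθ hA hs (hsu.trans hut) ht).comp
    RoughPartition.tendsto_append) ((h₁.add h₂).congr fun q => ?_)
  exact (RoughPartition.riemannSum_append q.1 q.2 Ξ).symm

lemma norm_sewingIntegral_sub_le (hΞ : SewingBound T ω θ A Ξ) (hω : IsControl T ω)
    (hθ : 1 < θ) (hA : 0 ≤ A) (hs : 0 ≤ s) (hst : s ≤ t) (ht : t ≤ T) :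
    ‖sewingIntegral Ξ s t - Ξ s t‖ ≤ A * sewingConst θ * ω s t ^ θ := by
  have := RoughPartition.meshFilter_neBot hst
  exact le_of_tendsto (((hΞ.tendsto_sewingIntegral hω hθ hA hs hst ht).sub_const _).norm)
    (Eventually.of_forall (hΞ.norm_riemannSum_sub_le hω hθ hA hs ht))

end SewingBound

end SewingIntegral

namespace IsControl

variable {V : Type*} [NormedAddCommGroup V] {T : ℝ} {ω : ℝ → ℝ → ℝ}

lemma exists_norm_le_of_norm_sub_le (hω : IsControl T ω) {I Ξ : ℝ → ℝ → V} {r θ C₂ : ℝ}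
    (hr : 0 ≤ r) (hrθ : r ≤ θ) (hC₂ : 0 ≤ C₂)
    (hΞ : ∃ C₁, ∀ s t, 0 ≤ s → s ≤ t → t ≤ T → ‖Ξ s t‖ ≤ C₁ * ω s t ^ r)
    (hI : ∀ s t, 0 ≤ s → s ≤ t → t ≤ T → ‖I s t - Ξ s t‖ ≤ C₂ * ω s t ^ θ) :
    ∃ C, ∀ s t, 0 ≤ s → s ≤ t → t ≤ T → ‖I s t‖ ≤ C * ω s t ^ r := by
  obtain ⟨C₁, hC₁⟩ := hΞ
  refine ⟨C₁ + C₂ * ω 0 T ^ (θ - r), fun s t hs hst ht => ?_⟩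
  have hθr : ω s t ^ θ ≤ ω 0 T ^ (θ - r) * ω s t ^ r := by
    simpa using hω.rpow_le_mul_rpow hr (sub_nonneg.2 hrθ) hs hst ht
  calc ‖I s t‖ ≤ ‖I s t - Ξ s t‖ + ‖Ξ s t‖ := norm_le_norm_sub_add _ _
    _ ≤ C₂ * (ω 0 T ^ (θ - r) * ω s t ^ r) + C₁ * ω s t ^ r :=
      add_le_add ((hI s t hs hst ht).trans (by gcongr)) (hC₁ s t hs hst ht)
    _ = (C₁ + C₂ * ω 0 T ^ (θ - r)) * ω s t ^ r := by ring

lemma continuousOn_of_add (hω : IsControl T ω) {I : ℝ → ℝ → V} {C r : ℝ} (hr : 0 < r)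
    (hadd : ∀ s u t, 0 ≤ s → s ≤ u → u ≤ t → t ≤ T → I s t = I s u + I u t)
    (hI : ∀ s t, 0 ≤ s → s ≤ t → t ≤ T → ‖I s t‖ ≤ C * ω s t ^ r) :
    ContinuousOn (fun t => I 0 t) (Icc 0 T) := by
  intro a ha
  rw [ContinuousWithinAt, tendsto_iff_norm_sub_tendsto_zero]
  have hlim : Tendsto (fun x => C * ω (min x a) (max x a) ^ r) (𝓝[Icc 0 T] a) (𝓝 0) := by
    simpa [Real.zero_rpow hr.ne'] using
      ((hω.tendsto_min_max ha).rpow_const (Or.inr hr.le)).const_mul C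
  refine squeeze_zero_norm' (eventually_nhdsWithin_of_forall fun x hx => ?_) hlim
  rcases le_total x a with hxa | hax
  · rw [hadd 0 x a le_rfl hx.1 hxa ha.2, sub_add_cancel_left, norm_neg, min_eq_left hxa,
      max_eq_right hxa]
    exact (norm_norm _).trans_le (hI x a hx.1 hxa ha.2)
  · rw [hadd 0 a x le_rfl ha.1 hax hx.2, add_sub_cancel_left, min_eq_right hax, max_eq_left hax]
    exact (norm_norm _).trans_le (hI a x ha.1 hax hx.2)

end IsControl

section Contraction

variable {ι κ μ : Type*} [Fintype ι] [Fintype κ] [Fintype μ]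

lemma norm_sum_mul_le (a : κ → ι → ℝ) (b : ι → ℝ) :
    ‖fun k => ∑ i, a k i * b i‖ ≤ Fintype.card ι * (‖a‖ * ‖b‖) := by
  refine (pi_norm_le_iff_of_nonneg (by positivity)).2 fun k => (norm_sum_le _ _).trans ?_
  refine (Finset.sum_le_card_nsmul _ _ (‖a‖ * ‖b‖) fun i _ => ?_).trans_eq (by simp)
  rw [norm_mul]
  exact mul_le_mul ((norm_le_pi_norm (a k) i).trans (norm_le_pi_norm a k)) (norm_le_pi_norm b i)
    (norm_nonneg _) (norm_nonneg _)

lemma norm_sum_sum_mul_le (a : ι → κ → μ → ℝ) (b : ι → μ → ℝ) :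
    ‖fun k => ∑ i, ∑ l, a i k l * b i l‖ ≤
      Fintype.card ι * Fintype.card μ * (‖a‖ * ‖b‖) := by
  refine (pi_norm_le_iff_of_nonneg (by positivity)).2 fun k => (norm_sum_le _ _).trans ?_
  refine (Finset.sum_le_card_nsmul _ _ (Fintype.card μ * (‖a‖ * ‖b‖)) fun i _ => ?_).trans_eq
    (by simp [mul_assoc])
  refine (norm_sum_le _ _).trans ((Finset.sum_le_card_nsmul _ _ (‖a‖ * ‖b‖) fun l _ => ?_).trans_eq
    (by simp))
  rw [norm_mul]
  exact mul_le_mul ((norm_le_pi_norm (a i k) l).trans ((norm_le_pi_norm (a i) k).trans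
    (norm_le_pi_norm a i))) ((norm_le_pi_norm (b i) l).trans (norm_le_pi_norm b i))
    (norm_nonneg _) (norm_nonneg _)

end Contraction

section RoughIntegral

variable {T p : ℝ} {ω : ℝ → ℝ → ℝ} {d e : ℕ} {X : ℝ → Fin d → ℝ}
  {XX : ℝ → ℝ → Fin d → Fin d → ℝ} {H : ℝ → Fin e → Fin d → ℝ}
  {H' : ℝ → Fin d → Fin e → Fin d → ℝ}

lemma roughSummand_sub_sub_eq {s u t : ℝ}
    (hchen : ∀ α β, XX s t α β = XX s u α β + (X u α - X s α) * (X t β - X u β) + XX u t α β) :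
    roughSummand X XX H H' s t - roughSummand X XX H H' s u - roughSummand X XX H H' u t =
      -((fun k => ∑ β, (H u - H s - ∑ γ, (X u γ - X s γ) • H' s γ) k β * (X t β - X u β)) +
        fun k => ∑ α, ∑ β, (H' u - H' s) α k β * XX u t α β) := by
  ext k
  simp only [roughSummand, hchen, Pi.sub_apply, Pi.add_apply, Pi.neg_apply, Finset.sum_apply,
    Pi.smul_apply, smul_eq_mul]
  have hX : ∑ γ, H s k γ * (X t γ - X s γ) - ∑ γ, H s k γ * (X u γ - X s γ) =
      ∑ γ, H s k γ * (X t γ - X u γ) := by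
    rw [← Finset.sum_sub_distrib]; congr! 1 with γ; ring
  have hcross : ∑ α, ∑ β, H' s α k β * ((X u α - X s α) * (X t β - X u β)) =
      ∑ β, (∑ α, (X u α - X s α) * H' s α k β) * (X t β - X u β) := by
    rw [Finset.sum_comm]; congr! 1 with β; rw [Finset.sum_mul]; congr! 1 with α; ring
  simp only [mul_add, Finset.sum_add_distrib]
  rw [hcross]
  simp only [sub_mul, Finset.sum_sub_distrib]
  linear_combination hX

lemma roughSummand_sewingBound (hp : 0 < p) (hω : IsControl T ω) (hX : IsRoughPath T p ω X XX)
    (hH : IsControlledPath T p ω X H H') :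
    ∃ A, 0 ≤ A ∧ SewingBound T ω (3 / p) A (roughSummand X XX H H') := by
  obtain ⟨CX, hCX₀, hCX⟩ := hω.exists_nonneg_bound hX.1.2
  obtain ⟨CXX, hCXX₀, hCXX⟩ := hω.exists_nonneg_bound hX.2.2.1
  obtain ⟨CH', hCH'₀, hCH'⟩ := hω.exists_nonneg_bound hH.2.1.2
  obtain ⟨CR, hCR₀, hCR⟩ := hω.exists_nonneg_bound hH.2.2
  refine ⟨d * (CR * CX) + d * d * (CH' * CXX), by positivity, fun s u t hs hsu hut ht => ?_⟩
  have hu : 0 ≤ u := hs.trans hsu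
  have huT : u ≤ T := hut.trans ht
  have h₁ := norm_sum_mul_le (H u - H s - ∑ γ, (X u γ - X s γ) • H' s γ) (X t - X u)
  have h₂ := norm_sum_sum_mul_le (H' u - H' s) (XX u t)
  simp only [Fintype.card_fin] at h₁ h₂
  have hω₁ := hω.rpow_mul_rpow_le (a := 2 / p) (b := 1 / p) (by positivity) (by positivity)
    hs hsu hut ht
  have hω₂ := hω.rpow_mul_rpow_le (a := 1 / p) (b := 2 / p) (by positivity) (by positivity)
    hs hsu hut ht
  rw [show 2 / p + 1 / p = 3 / p by ring] at hω₁
  rw [show 1 / p + 2 / p = 3 / p by ring] at hω₂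
  rw [roughSummand_sub_sub_eq (hX.2.2.2 s u t hs hsu hut ht), norm_neg]
  calc _ ≤ _ := norm_add_le _ _
    _ ≤ d * ((CR * ω s u ^ (2 / p)) * (CX * ω u t ^ (1 / p))) +
        d * d * ((CH' * ω s u ^ (1 / p)) * (CXX * ω u t ^ (2 / p))) := by
      gcongr
      · have hR := hCR s u hs hsu huT
        exact h₁.trans (mul_le_mul_of_nonneg_left (mul_le_mul hR (hCX u t hu hut ht)
          (norm_nonneg _) ((norm_nonneg _).trans hR)) (Nat.cast_nonneg d))
      · have hH' := hCH' s u hs hsu huT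
        exact h₂.trans (mul_le_mul_of_nonneg_left (mul_le_mul hH' (hCXX u t hu hut ht)
          (norm_nonneg _) ((norm_nonneg _).trans hH')) (by positivity))
    _ = d * (CR * CX) * (ω s u ^ (2 / p) * ω u t ^ (1 / p)) +
        d * d * (CH' * CXX) * (ω s u ^ (1 / p) * ω u t ^ (2 / p)) := by ring
    _ ≤ d * (CR * CX) * ω s t ^ (3 / p) + d * d * (CH' * CXX) * ω s t ^ (3 / p) := by
      gcongr
    _ = _ := by ring

lemma exists_norm_roughSummand_le (hp : 0 < p) (hω : IsControl T ω)
    (hX : IsRoughPath T p ω X XX) (hH : ContinuousOn H (Icc 0 T))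
    (hH' : ContinuousOn H' (Icc 0 T)) :
    ∃ C, ∀ s t, 0 ≤ s → s ≤ t → t ≤ T →
      ‖roughSummand X XX H H' s t‖ ≤ C * ω s t ^ (1 / p) := by
  obtain ⟨M, hM⟩ := isCompact_Icc.exists_bound_of_continuousOn hH
  obtain ⟨M', hM'⟩ := isCompact_Icc.exists_bound_of_continuousOn hH'
  obtain ⟨CX, hCX₀, hCX⟩ := hω.exists_nonneg_bound hX.1.2
  obtain ⟨CXX, hCXX₀, hCXX⟩ := hω.exists_nonneg_bound hX.2.2.1
  refine ⟨d * (M * CX) + d * d * (M' * CXX * ω 0 T ^ (1 / p)), fun s t hs hst ht => ?_⟩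
  have hsI : s ∈ Icc 0 T := ⟨hs, hst.trans ht⟩
  have hM₀ : 0 ≤ M := (norm_nonneg _).trans (hM s hsI)
  have hM'₀ : 0 ≤ M' := (norm_nonneg _).trans (hM' s hsI)
  have h₁ := norm_sum_mul_le (H s) (X t - X s)
  have h₂ := norm_sum_sum_mul_le (H' s) (XX s t)
  simp only [Fintype.card_fin] at h₁ h₂
  have hω₂ : ω s t ^ (2 / p) ≤ ω 0 T ^ (1 / p) * ω s t ^ (1 / p) := by
    rw [show 2 / p = 1 / p + 1 / p by ring]
    exact hω.rpow_le_mul_rpow (by positivity) (by positivity) hs hst ht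
  calc ‖roughSummand X XX H H' s t‖ ≤ _ := norm_add_le _ _
    _ ≤ d * (M * (CX * ω s t ^ (1 / p))) + d * d * (M' * (CXX * ω s t ^ (2 / p))) := by
      gcongr
      · exact h₁.trans (mul_le_mul_of_nonneg_left (mul_le_mul (hM s hsI) (hCX s t hs hst ht)
          (norm_nonneg _) hM₀) (Nat.cast_nonneg d))
      · exact h₂.trans (mul_le_mul_of_nonneg_left (mul_le_mul (hM' s hsI) (hCXX s t hs hst ht)
          (norm_nonneg _) hM'₀) (by positivity))
    _ ≤ d * (M * (CX * ω s t ^ (1 / p))) +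
        d * d * (M' * (CXX * (ω 0 T ^ (1 / p) * ω s t ^ (1 / p)))) := by gcongr
    _ = _ := by ring

end RoughIntegral

theorem statement5_general (T p : ℝ) (hp1 : 1 ≤ p) (hp3 : p < 3) (d e : ℕ)
    (ω : ℝ → ℝ → ℝ) (hω : IsControl T ω)
    (X : ℝ → Fin d → ℝ) (XX : ℝ → ℝ → Fin d → Fin d → ℝ)
    (hX : IsRoughPath T p ω X XX)
    (H : ℝ → Fin e → Fin d → ℝ) (H' : ℝ → Fin d → Fin e → Fin d → ℝ)
    (hH : IsControlledPath T p ω X H H') :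
    ∃ I : ℝ → ℝ → Fin e → ℝ,
      (∀ s t : ℝ, 0 ≤ s → s ≤ t → t ≤ T →
        RSumLimit s t (roughSummand X XX H H') (I s t)) ∧
      (∀ s u t : ℝ, 0 ≤ s → s ≤ u → u ≤ t → t ≤ T → I s t = I s u + I u t) ∧
      (∃ C : ℝ, ∀ s t : ℝ, 0 ≤ s → s ≤ t → t ≤ T →
        ‖I s t - roughSummand X XX H H' s t‖ ≤ C * ω s t ^ (3 / p)) ∧
      ContinuousOn (fun t => I 0 t) (Set.Icc 0 T) ∧
      (∃ C : ℝ, ∀ s t : ℝ, 0 ≤ s → s ≤ t → t ≤ T → ‖I s t‖ ≤ C * ω s t ^ (1 / p)) := by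
  have hp : 0 < p := by linarith
  have hθ : 1 < 3 / p := (one_lt_div hp).2 hp3
  obtain ⟨A, hA, hΞ⟩ := roughSummand_sewingBound hp hω hX hH
  have hadd : ∀ s u t : ℝ, 0 ≤ s → s ≤ u → u ≤ t → t ≤ T → _ :=
    fun s u t hs hsu hut ht => hΞ.sewingIntegral_add hω hθ hA hs hsu hut ht
  have hloc : ∀ s t : ℝ, 0 ≤ s → s ≤ t → t ≤ T → _ :=
    fun s t hs hst ht => hΞ.norm_sewingIntegral_sub_le hω hθ hA hs hst ht
  obtain ⟨C, hC⟩ := hω.exists_norm_le_of_norm_sub_le (by positivity)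
    ((div_le_div_iff_of_pos_right hp).2 (by norm_num))
    (mul_nonneg hA (sewingConst_nonneg _)) (exists_norm_roughSummand_le hp hω hX hH.1.1 hH.2.1.1)
    hloc
  exact ⟨sewingIntegral (roughSummand X XX H H'),
    fun s t hs hst ht => rsumLimit_of_tendsto (hΞ.tendsto_sewingIntegral hω hθ hA hs hst ht),
    hadd, ⟨_, hloc⟩, hω.continuousOn_of_add (by positivity) hadd hC, ⟨C, hC⟩⟩

/-- Existence of the rough integral of a controlled integrand: the
compensated Riemann sums converge, the limit is additive, approximated by the local
expansion up to `O(ω^{3/p})`, and defines a path in `C^p_ω([0,T],ℝ^e)`. -/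
theorem statement5 (T p : ℝ) (hT : 0 ≤ T) (hp1 : 1 ≤ p) (hp3 : p < 3) (d e : ℕ)
    (ω : ℝ → ℝ → ℝ) (hω : IsControl T ω)
    (X : ℝ → Fin d → ℝ) (XX : ℝ → ℝ → Fin d → Fin d → ℝ)
    (hX : IsRoughPath T p ω X XX)
    (H : ℝ → Fin e → Fin d → ℝ) (H' : ℝ → Fin d → Fin e → Fin d → ℝ)
    (hH : IsControlledPath T p ω X H H') :
    ∃ I : ℝ → ℝ → Fin e → ℝ,
      (∀ s t : ℝ, 0 ≤ s → s ≤ t → t ≤ T →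
        RSumLimit s t (roughSummand X XX H H') (I s t)) ∧
      (∀ s u t : ℝ, 0 ≤ s → s ≤ u → u ≤ t → t ≤ T → I s t = I s u + I u t) ∧
      (∃ C : ℝ, ∀ s t : ℝ, 0 ≤ s → s ≤ t → t ≤ T →
        ‖I s t - roughSummand X XX H H' s t‖ ≤ C * ω s t ^ (3 / p)) ∧
      ContinuousOn (fun t => I 0 t) (Set.Icc 0 T) ∧
      (∃ C : ℝ, ∀ s t : ℝ, 0 ≤ s → s ≤ t → t ≤ T → ‖I s t‖ ≤ C * ω s t ^ (1 / p)) :=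
  statement5_general T p hp1 hp3 d e ω hω X XX hX H H' hH
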